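/- arXiv:2303.15195 — 6 statements merged into one kernel-verified Lean document; each statement's English description precedes it below -/
import Mathlib

section
/- Let n be a positive integer and let (n_1, ..., n_ℓ) be a composition of n into ℓ positive parts. Let (m_1, ..., m_ℓ) be positive integers with m_1 ≥ m_2 ≥ ... ≥ m_ℓ and n_i ≤ m_i for all i. For z ∈ {0, ..., n}, let U_z be the set of vectors (z_1, ..., z_ℓ) of nonnegative integers with z_i ≤ n_i for all i and z_1 + ... + z_ℓ = z. If j ∈ {1, ..., ℓ} and λ ∈ {0, ..., n_j − 1} are the unique integers satisfying z = n_1 + ... + n_{j−1} + λ, then max { m_1 z_1 + ... + m_ℓ z_ℓ : (z_1,...,z_ℓ) ∈ U_z } = m_1 n_1 + ... + m_{j−1} n_{j−1} + m_j λ. -/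
/-!
The maximum is attained by the greedy vector, which fills the parts `1, …, j - 1` completely and
puts the remaining `λ` into part `j`. Any other admissible vector differs from it by moving mass
from indices `≤ j` to indices `≥ j`; since the weights are antitone, comparing every weight with
`m_j` shows that such a move cannot increase the weighted sum.
-/

open Finset

section Exchange

variable {ι R : Type*} [Fintype ι] [LinearOrder ι]
  [CommRing R] [LinearOrder R] [IsOrderedRing R]

theorem Antitone.sum_mul_le_sum_mul_of_crossing {m x y : ι → R} (hm : Antitone m) (j : ι)
    (hlt : ∀ i < j, x i ≤ y i) (hgt : ∀ i, j < i → y i ≤ x i) (hsum : ∑ i, x i = ∑ i, y i) :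
    ∑ i, m i * x i ≤ ∑ i, m i * y i := by
  have hpointwise : ∀ i, m i * (x i - y i) ≤ m j * (x i - y i) := fun i => by
    rcases lt_trichotomy i j with hij | rfl | hij
    · exact mul_le_mul_of_nonpos_right (hm hij.le) (sub_nonpos.2 (hlt i hij))
    · exact le_rfl
    · exact mul_le_mul_of_nonneg_right (hm hij.le) (sub_nonneg.2 (hgt i hij))
  have hzero : ∑ i, m j * (x i - y i) = 0 := by
    rw [← mul_sum, sum_sub_distrib, hsum, sub_self, mul_zero]
  simpa only [mul_sub, sum_sub_distrib, sub_nonpos] using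
    (sum_le_sum fun i _ => hpointwise i).trans hzero.le

end Exchange

section GreedyFill

variable {ι M : Type*} [LinearOrder ι]

def greedyFill [Zero M] (a : ι → M) (j : ι) (r : M) : ι → M :=
  fun i => if i < j then a i else if i = j then r else 0

theorem greedyFill_le [Preorder M] [Zero M] {a : ι → M} {j : ι} {r : M} (hr : r ≤ a j)
    (ha : ∀ i, j < i → 0 ≤ a i) (i : ι) : greedyFill a j r i ≤ a i := by
  unfold greedyFill
  split_ifs with hlt heq
  · exact le_rfl
  · exact heq ▸ hr
  · exact ha i (lt_of_le_of_ne (not_lt.1 hlt) (Ne.symm heq))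

theorem sum_mul_greedyFill [Fintype ι] [NonUnitalNonAssocSemiring M] (f a : ι → M) (j : ι)
    (r : M) :
    ∑ i, f i * greedyFill a j r i = ∑ i ∈ univ.filter (· < j), f i * a i + f j * r := by
  rw [← sum_filter_add_sum_filter_not univ (· < j)]
  congr 1
  · exact sum_congr rfl fun i hi => by simp [greedyFill, (mem_filter.1 hi).2]
  · rw [sum_eq_single_of_mem j (by simp)]
    · simp [greedyFill]
    · intro i hi hij
      simp [greedyFill, (mem_filter.1 hi).2, hij]

theorem sum_greedyFill [Fintype ι] [NonAssocSemiring M] (a : ι → M) (j : ι) (r : M) :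
    ∑ i, greedyFill a j r i = ∑ i ∈ univ.filter (· < j), a i + r := by
  simpa using sum_mul_greedyFill 1 a j r

end GreedyFill

theorem stmt_0_general (ℓ : ℕ) (nv mv : Fin ℓ → ℕ)
    (hanti : ∀ i i' : Fin ℓ, i ≤ i' → mv i' ≤ mv i)
    (z : ℕ)
    (j : Fin ℓ) (lam : ℕ) (hlam : lam < nv j)
    (hdec : z = (∑ i ∈ Finset.univ.filter (· < j), nv i) + lam) :
    IsGreatest
      {S : ℕ | ∃ zv : Fin ℓ → ℕ, (∀ i, zv i ≤ nv i) ∧ (∑ i, zv i = z) ∧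
        S = ∑ i, mv i * zv i}
      ((∑ i ∈ Finset.univ.filter (· < j), mv i * nv i) + mv j * lam) := by
  rw [← sum_mul_greedyFill]
  set g := greedyFill nv j lam
  refine ⟨⟨g, greedyFill_le hlam.le fun _ _ => Nat.zero_le _,
    by rw [sum_greedyFill, hdec], rfl⟩, ?_⟩
  rintro _ ⟨zv, hzv, hzsum, rfl⟩
  have hweights : Antitone fun i => (mv i : ℤ) := Nat.mono_cast.comp_antitone hanti
  have hexchange := hweights.sum_mul_le_sum_mul_of_crossing
    (x := fun i => (zv i : ℤ)) (y := fun i => (g i : ℤ)) j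
    (fun i hi => by simpa [g, greedyFill, hi] using hzv i)
    (fun i hi => by simp [g, greedyFill, hi.not_gt, hi.ne'])
    (by rw [← Nat.cast_sum, ← Nat.cast_sum, hzsum, sum_greedyFill, hdec])
  exact_mod_cast hexchange

/-- Maximizing a weighted sum over integer vectors bounded coordinatewise,
with weights sorted descendingly. -/
theorem stmt_0 (ℓ n : ℕ) (hℓ : 0 < ℓ) (nv mv : Fin ℓ → ℕ)
    (hnpos : ∀ i, 0 < nv i) (hmpos : ∀ i, 0 < mv i)
    (hsum : ∑ i, nv i = n)
    (hanti : ∀ i i' : Fin ℓ, i ≤ i' → mv i' ≤ mv i)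
    (hnm : ∀ i, nv i ≤ mv i)
    (z : ℕ) (hz : z ≤ n)
    (j : Fin ℓ) (lam : ℕ) (hlam : lam < nv j)
    (hdec : z = (∑ i ∈ Finset.univ.filter (· < j), nv i) + lam) :
    IsGreatest
      {S : ℕ | ∃ zv : Fin ℓ → ℕ, (∀ i, zv i ≤ nv i) ∧ (∑ i, zv i = z) ∧
        S = ∑ i, mv i * zv i}
      ((∑ i ∈ Finset.univ.filter (· < j), mv i * nv i) + mv j * lam) :=
  stmt_0_general ℓ nv mv hanti z j lam hlam hdec
end

section
/- Let q be a prime power, m a positive integer, and θ the Frobenius automorphism x ↦ x^q on F_{q^m}. For σ = θ^u with u ∈ {0, ..., m−1} and zero derivation, the number of distinct (σ,0)-conjugacy classes of F_{q^m} equals q^{gcd(u,m)}, where two elements a, b are (σ,0)-conjugate if there exists c ∈ F_{q^m}* with σ(c)·a·c^{−1} = b. -/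
/-!
For `c ≠ 0` we have `σ c * a * c⁻¹ = c ^ (q ^ u - 1) * a`, so the nonzero conjugacy classes are
the cosets in `Fˣ` of the subgroup of `(q ^ u - 1)`-th powers. As `Fˣ` is cyclic of order
`q ^ m - 1`, this subgroup has index `gcd (q ^ m - 1) (q ^ u - 1) = q ^ gcd u m - 1`; the trivial
class `{0}` accounts for the missing one.
-/

open Function

theorem Nat.card_setOf_preimage_singleton_of_surjective {α β : Type*} {f : α → β}
    (hf : Surjective f) : Nat.card {S : Set α | ∃ a, S = f ⁻¹' {f a}} = Nat.card β := by
  have hrange : {S : Set α | ∃ a, S = f ⁻¹' {f a}} = Set.range fun b => f ⁻¹' {b} := by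
    ext S
    constructor
    · rintro ⟨a, rfl⟩
      exact ⟨f a, rfl⟩
    · rintro ⟨b, rfl⟩
      obtain ⟨a, rfl⟩ := hf b
      exact ⟨a, rfl⟩
  rw [hrange, Nat.card_range_of_injective]
  exact (Set.preimage_injective.2 hf).comp Set.singleton_injective

theorem pow_mul_mul_inv_eq_pow_sub_one_mul {G₀ : Type*} [CommGroupWithZero G₀] {c : G₀}
    (hc : c ≠ 0) {n : ℕ} (hn : 1 ≤ n) (a : G₀) : c ^ n * a * c⁻¹ = c ^ (n - 1) * a := by
  rw [pow_sub₀ c hc hn, pow_one, mul_right_comm]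

theorem exists_ne_zero_pow_mul_eq_iff {G₀ : Type*} [CommGroupWithZero G₀] (n : ℕ) (a b : G₀) :
    (∃ c, c ≠ 0 ∧ c ^ n * a = b) ↔
      ∃ c ∈ (powMonoidHom n : G₀ˣ →* G₀ˣ).range, (c : G₀) * a = b := by
  constructor
  · rintro ⟨c, hc, rfl⟩
    exact ⟨Units.mk0 c hc ^ n, ⟨_, rfl⟩, by simp⟩
  · rintro ⟨_, ⟨c, rfl⟩, rfl⟩
    exact ⟨c, c.ne_zero, by simp⟩

namespace Subgroup

variable {G₀ : Type*} [CommGroupWithZero G₀] (H : Subgroup G₀ˣ)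

open Classical in
noncomputable def cosetOrZero (a : G₀) : Option (G₀ˣ ⧸ H) :=
  if ha : a = 0 then none else some (Units.mk0 a ha)

theorem cosetOrZero_surjective : Surjective H.cosetOrZero := by
  rintro (_ | ⟨x⟩)
  · exact ⟨0, by simp [cosetOrZero]⟩
  · induction x using QuotientGroup.induction_on with | H u =>
    exact ⟨u, by simp [cosetOrZero]⟩

theorem setOf_exists_mem_mul_eq_preimage_cosetOrZero (a : G₀) :
    {b | ∃ c ∈ H, (c : G₀) * a = b} = H.cosetOrZero ⁻¹' {H.cosetOrZero a} := by
  ext b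
  rcases eq_or_ne a 0 with rfl | ha
  · simpa [cosetOrZero, eq_comm (a := (0 : G₀))] using fun _ => ⟨1, H.one_mem⟩
  rcases eq_or_ne b 0 with rfl | hb
  · simp [cosetOrZero, ha]
  lift a to G₀ˣ using ha.isUnit
  lift b to G₀ˣ using hb.isUnit
  simp [cosetOrZero, QuotientGroup.eq_iff_div_mem, ← Units.val_mul, Units.val_inj,
    ← eq_div_iff_mul_eq']

theorem card_orbits_units_mul_eq_index_add_one [Finite G₀] :
    Nat.card {S : Set G₀ | ∃ a, S = {b | ∃ c ∈ H, (c : G₀) * a = b}} = H.index + 1 := by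
  simp only [setOf_exists_mem_mul_eq_preimage_cosetOrZero]
  rw [Nat.card_setOf_preimage_singleton_of_surjective H.cosetOrZero_surjective,
    Finite.card_option, index]

end Subgroup

theorem stmt_1_general (q m u : ℕ)
    (F : Type*) [Field F] [Fintype F] (hcard : Fintype.card F = q ^ m)
    (σ : F ≃+* F) (hσ : ∀ x : F, σ x = x ^ q ^ u) :
    Nat.card {S : Set F | ∃ a : F, S = {b | ∃ c : F, c ≠ 0 ∧ σ c * a * c⁻¹ = b}} =
      q ^ Nat.gcd u m := by
  have hq : 0 < q := by
    have : 1 < q ^ m := hcard ▸ Fintype.one_lt_card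
    exact Nat.pos_of_ne_zero fun hq0 => by rcases m with _ | k <;> simp [hq0] at this
  have hclass (a : F) : {b | ∃ c : F, c ≠ 0 ∧ σ c * a * c⁻¹ = b} =
      {b | ∃ c ∈ (powMonoidHom (q ^ u - 1) : Fˣ →* Fˣ).range, (c : F) * a = b} := by
    ext b
    rw [Set.mem_ofPred_eq, Set.mem_ofPred_eq, ← exists_ne_zero_pow_mul_eq_iff]
    refine exists_congr fun c => and_congr_right fun hc => ?_
    rw [hσ, pow_mul_mul_inv_eq_pow_sub_one_mul hc (Nat.one_le_pow _ _ hq)]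
  simp only [hclass]
  rw [Subgroup.card_orbits_units_mul_eq_index_add_one, IsCyclic.index_powMonoidHom_range,
    Nat.card_units, Nat.card_eq_fintype_card, hcard, Nat.pow_sub_one_gcd_pow_sub_one,
    Nat.gcd_comm, Nat.sub_add_cancel (Nat.one_le_pow _ _ hq)]

/-- The number of distinct (σ,0)-conjugacy classes of `F_{q^m}` for `σ = θ^u`
(`θ` the Frobenius) equals `q^(gcd(u,m))`. -/
theorem stmt_1 (q m u : ℕ) (hq : IsPrimePow q) (hm : 0 < m) (hu : u < m)
    (F : Type*) [Field F] [Fintype F] (hcard : Fintype.card F = q ^ m)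
    (σ : F ≃+* F) (hσ : ∀ x : F, σ x = x ^ q ^ u) :
    Nat.card {S : Set F | ∃ a : F, S = {b | ∃ c : F, c ≠ 0 ∧ σ c * a * c⁻¹ = b}} =
      q ^ Nat.gcd u m :=
  stmt_1_general q m u F hcard σ hσ
end

section
/- Let C be an F_q-linear sum-rank-metric code in F_q^{m_1×n_1} × ... × F_q^{m_ℓ×n_ℓ} with |C| ≥ 2, where m_1 ≥ ... ≥ m_ℓ > 0 and 0 < n_i ≤ m_i for all i. Let d be the minimum sum-rank distance of C and let j ∈ {1,...,ℓ} and 0 ≤ λ < n_j be the unique integers with d − 1 = n_1 + ... + n_{j−1} + λ. Then |C| ≤ q^{(Σ_{i=j}^{ℓ} m_i n_i) − m_j λ}. -/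
/-!
Puncture the code at the first `d - 1` columns of the block tuple laid side by side. Two codewords
agreeing on all remaining columns differ by a tuple whose blocks have their nonzero columns among
the deleted ones, so its sum-rank weight is at most `d - 1`; hence they are equal. The code thus
injects into the space of the remaining entries, which has `q ^ (∑ i ≥ j, mᵢ nᵢ - m_j λ)`
elements.
-/

open Finset

namespace Matrix

variable {F : Type*} [Field F] {m n : Type*} [Fintype n]

theorem eq_zero_of_rank_eq_zero {A : Matrix m n F} (h : A.rank = 0) : A = 0 := by
  classical
  rw [rank, Submodule.finrank_eq_zero, LinearMap.range_eq_bot] at h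
  ext k c
  simpa [mulVecLin, mulVec_single] using congrFun (LinearMap.congr_fun h (Pi.single c 1)) k

theorem rank_le_card_of_col_eq_zero [Fintype m] (A : Matrix m n F) (s : Finset n)
    (h : ∀ k, ∀ c ∉ s, A k c = 0) : A.rank ≤ #s := by
  rw [← rank_transpose]
  refine rank_le_card_of_support_subset Aᵀ s fun c hc => ?_
  by_contra hcs
  exact hc (funext fun k => h k c hcs)

end Matrix

section Puncturing

variable {F : Type*} [Field F] {ι : Type*} [Fintype ι] {m n : ι → Type*} [∀ i, Fintype (n i)]

theorem sum_rank_sub_ne_zero {X Y : ∀ i, Matrix (m i) (n i) F} (h : X ≠ Y) :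
    ∑ i, (X i - Y i).rank ≠ 0 := fun h0 =>
  h <| funext fun i =>
    sub_eq_zero.1 <| Matrix.eq_zero_of_rank_eq_zero <| sum_eq_zero_iff.1 h0 i (mem_univ i)

variable [∀ i, Fintype (m i)]

theorem eq_of_eq_off_cols {C : Set (∀ i, Matrix (m i) (n i) F)} {d : ℕ}
    (hd : ∀ X ∈ C, ∀ Y ∈ C, X ≠ Y → d ≤ ∑ i, (X i - Y i).rank)
    (s : ∀ i, Finset (n i)) (hs : ∑ i, #(s i) < d) {X Y : ∀ i, Matrix (m i) (n i) F}
    (hX : X ∈ C) (hY : Y ∈ C) (hXY : ∀ i k, ∀ c ∉ s i, X i k c = Y i k c) : X = Y := by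
  by_contra hne
  have hrank : ∑ i, (X i - Y i).rank ≤ ∑ i, #(s i) :=
    sum_le_sum fun i _ => (X i - Y i).rank_le_card_of_col_eq_zero (s i) fun k c hc => by
      rw [Matrix.sub_apply, hXY i k c hc, sub_self]
  exact (hrank.trans_lt hs).not_ge (hd X hX Y hY hne)

theorem card_le_pow_of_sum_card_cols_lt [Fintype F] [∀ i, DecidableEq (n i)]
    {C : Set (∀ i, Matrix (m i) (n i) F)} {d : ℕ}
    (hd : ∀ X ∈ C, ∀ Y ∈ C, X ≠ Y → d ≤ ∑ i, (X i - Y i).rank)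
    (s : ∀ i, Finset (n i)) (hs : ∑ i, #(s i) < d) :
    Nat.card C ≤ Fintype.card F ^ ∑ i, Fintype.card (m i) * (Fintype.card (n i) - #(s i)) := by
  let puncture (X : C) : ∀ i, m i → ((s i)ᶜ : Finset (n i)) → F := fun i k c => X.1 i k c
  have hinj : Function.Injective puncture := fun X Y hXY =>
    Subtype.ext <| eq_of_eq_off_cols hd s hs X.2 Y.2 fun i k c hc =>
      congrFun (congrFun (congrFun hXY i) k) ⟨c, mem_compl.2 hc⟩
  calc Nat.card C ≤ Nat.card (∀ i, m i → ((s i)ᶜ : Finset (n i)) → F) :=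
        Nat.card_le_card_of_injective _ hinj
    _ = _ := by
      rw [Nat.card_pi, ← prod_pow_eq_pow_sum]
      refine prod_congr rfl fun i _ => ?_
      rw [Nat.card_fun, Nat.card_fun, ← pow_mul, mul_comm]
      simp only [Nat.card_eq_fintype_card, Fintype.card_coe, card_compl]

end Puncturing

section InitialCols

variable {ℓ : ℕ} (nv : Fin ℓ → ℕ) (j : Fin ℓ) (lam : ℕ)

/-- The first `∑ i < j, nv i + lam` columns of the block matrices laid side by side. -/
def initialCols (i : Fin ℓ) : Finset (Fin (nv i)) :=
  {c | i < j ∨ i = j ∧ (c : ℕ) < lam}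

variable {nv j lam}

theorem card_initialCols (hlam : lam ≤ nv j) (i : Fin ℓ) :
    #(initialCols nv j lam i) = if i < j then nv i else if i = j then lam else 0 := by
  split_ifs with hlt heq
  · simp [initialCols, hlt]
  · subst heq
    simp [initialCols, Fin.card_filter_val_lt, hlam]
  · simp [initialCols, hlt, heq]

theorem sum_card_initialCols (hlam : lam ≤ nv j) :
    ∑ i, #(initialCols nv j lam i) = ∑ i ∈ {i | i < j}, nv i + lam := by
  rw [sum_congr rfl fun i _ => card_initialCols hlam i, sum_ite, sum_ite_eq' _ j, if_pos (by simp)]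

theorem sum_mul_card_compl_initialCols (mv : Fin ℓ → ℕ) (hlam : lam ≤ nv j) :
    ∑ i, mv i * (nv i - #(initialCols nv j lam i)) =
      ∑ i ∈ {i | j ≤ i}, mv i * nv i - mv j * lam := by
  refine Nat.eq_sub_of_add_eq ?_
  have hlow : ∀ i, mv i * (nv i - #(initialCols nv j lam i)) ≠ 0 → j ≤ i := fun i h => by
    by_contra hij
    rw [card_initialCols hlam, if_pos (not_le.1 hij), Nat.sub_self, mul_zero] at h
    exact h rfl
  have hj : mv j * lam = ∑ i ∈ {i | j ≤ i}, if i = j then mv j * lam else 0 := by simp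
  rw [← sum_filter_of_ne fun i _ => hlow i, hj, ← sum_add_distrib]
  refine sum_congr rfl fun i hi => ?_
  rw [card_initialCols hlam]
  obtain rfl | hji := eq_or_lt_of_le (mem_filter.1 hi).2
  · simp [← Nat.mul_add, Nat.sub_add_cancel hlam]
  · simp [not_lt.2 hji.le, hji.ne']

end InitialCols

theorem stmt_5_general (q : ℕ) (F : Type*) [Field F] [Fintype F]
    (hcard : Fintype.card F = q) (ℓ : ℕ) (mv nv : Fin ℓ → ℕ)
    (C : Submodule F (∀ i : Fin ℓ, Matrix (Fin (mv i)) (Fin (nv i)) F))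
    (d : ℕ)
    (hd : IsLeast {w : ℕ | ∃ X ∈ C, ∃ Y ∈ C, X ≠ Y ∧ w = ∑ i, (X i - Y i).rank} d)
    (j : Fin ℓ) (lam : ℕ) (hlam : lam < nv j)
    (hdec : d - 1 = (∑ i ∈ Finset.univ.filter (· < j), nv i) + lam) :
    Nat.card C ≤ q ^ ((∑ i ∈ Finset.univ.filter (j ≤ ·), mv i * nv i) - mv j * lam) := by
  have hd_pos : 0 < d := by
    obtain ⟨X, -, Y, -, hXY, rfl⟩ := hd.1
    exact Nat.pos_of_ne_zero (sum_rank_sub_ne_zero hXY)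
  have hdist : ∀ X ∈ C, ∀ Y ∈ C, X ≠ Y → d ≤ ∑ i, (X i - Y i).rank :=
    fun X hX Y hY hXY => hd.2 ⟨X, hX, Y, hY, hXY, rfl⟩
  have hcols : ∑ i, #(initialCols nv j lam i) < d := by
    rw [sum_card_initialCols hlam.le]
    omega
  have hbound := card_le_pow_of_sum_card_cols_lt hdist _ hcols
  simp only [Fintype.card_fin, hcard, sum_mul_card_compl_initialCols mv hlam.le] at hbound
  exact hbound

/-- Singleton-like bound for linear sum-rank-metric codes with varying matrix sizes. -/
theorem stmt_5 (q : ℕ) (hq : IsPrimePow q) (F : Type*) [Field F] [Fintype F]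
    (hcard : Fintype.card F = q) (ℓ : ℕ) (hℓ : 0 < ℓ) (mv nv : Fin ℓ → ℕ)
    (hmanti : ∀ i i' : Fin ℓ, i ≤ i' → mv i' ≤ mv i)
    (hmpos : ∀ i, 0 < mv i) (hnpos : ∀ i, 0 < nv i) (hnm : ∀ i, nv i ≤ mv i)
    (C : Submodule F (∀ i : Fin ℓ, Matrix (Fin (mv i)) (Fin (nv i)) F))
    (hC2 : 2 ≤ Nat.card C)
    (d : ℕ)
    (hd : IsLeast {w : ℕ | ∃ X ∈ C, ∃ Y ∈ C, X ≠ Y ∧ w = ∑ i, (X i - Y i).rank} d)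
    (j : Fin ℓ) (lam : ℕ) (hlam : lam < nv j)
    (hdec : d - 1 = (∑ i ∈ Finset.univ.filter (· < j), nv i) + lam) :
    Nat.card C ≤ q ^ ((∑ i ∈ Finset.univ.filter (j ≤ ·), mv i * nv i) - mv j * lam) :=
  stmt_5_general q F hcard ℓ mv nv C d hd j lam hlam hdec
end

section
/- Let σ be an automorphism of F_{q^m}, δ = 0, and define the operator D_a(b) = σ(b)·a for a, b ∈ F_{q^m}, with powers D_a^i(b) defined by iteration. Let a_1, ..., a_ℓ ∈ F_{q^m} be representatives of pairwise distinct nontrivial (σ,0)-conjugacy classes, and for each i let x^{(i)} = (x^{(i)}_1, ..., x^{(i)}_{n_i}) ∈ F_{q^m}^{n_i} consist of F_q-linearly independent elements. Then the generalized Moore matrix whose i-th block has rows (D_{a_i}^r(x^{(i)}_1), ..., D_{a_i}^r(x^{(i)}_{n_i})) for r = 0, ..., d−1 has F_{q^m}-rank equal to min(d, n_1 + ... + n_ℓ). -/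
/-!
Write `P(D_α)` for the operator `x ↦ ∑_{r<k} c_r D_α^r(x)` of a skew polynomial
`P = ∑_{r<k} c_r t^r` in `F[t; σ]`; it is linear over the fixed field `F^σ`. A left kernel vector
of the first `d ≤ n_1 + ⋯ + n_ℓ` rows of the Moore matrix is a nonzero `P` with fewer than `d`
coefficients such that every `x^{(i)}_j` lies in `ker P(D_{a_i})`. So it suffices to show
`∑_i dim ker P(D_{a_i}) < k`, by induction on `k`. If `y ≠ 0` lies in `ker P(D_{a_i})`, then
`b = σ(y) a_i y⁻¹` is a right root of `P`, so `P = Q · (t - b)` with `Q` shorter by one and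
`P(D_α) = Q(D_α) ∘ (D_α - b)`. The kernel of `D_{a_j} - b` is `F^σ y` when `j = i` and zero
otherwise, because `a_j` is not conjugate to `a_i`; subadditivity of kernel dimensions under
composition closes the induction.
-/

/-- Iterated generalized operator `D_a^r(b)` for zero derivation: `D_a(b) = σ(b)·a`. -/
def Dit {F : Type*} [Field F] (σ : F ≃+* F) (a b : F) : ℕ → F
  | 0 => b
  | r + 1 => σ (Dit σ a b r) * a

universe v

open Finset Module LinearMap

theorem LinearMap.rank_ker_comp_le {K : Type*} {V W : Type v} {U : Type*} [DivisionRing K]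
    [AddCommGroup V] [Module K V] [AddCommGroup W] [Module K W] [AddCommGroup U] [Module K U]
    (f : W →ₗ[K] U) (g : V →ₗ[K] W) :
    Module.rank K (ker (f ∘ₗ g)) ≤ Module.rank K (ker g) + Module.rank K (ker f) := by
  have hg : ∀ v ∈ ker (f ∘ₗ g), g v ∈ ker f := fun v hv => hv
  rw [← (g.restrict hg).rank_range_add_rank_ker, add_comm, ker_restrict,
    (Submodule.comapSubtypeEquivOfLe (ker_le_ker_comp g f)).rank_eq]
  exact add_le_add_right (Submodule.rank_le _) _

lemma rank_span_range_fin {K V : Type*} [Field K] [AddCommGroup V] [Module K V] {n : ℕ}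
    {v : Fin n → V} (hv : LinearIndependent K v) :
    Module.rank K (Submodule.span K (Set.range v)) = n := by
  rw [rank_span hv, ← Cardinal.lift_inj.{_, 0}, Cardinal.mk_range_eq_of_injective hv.injective]
  simp

namespace GeneralizedMoore

variable {F : Type*} [Field F] (σ : F ≃+* F)

lemma Dit_add (a x y : F) (r : ℕ) : Dit σ a (x + y) r = Dit σ a x r + Dit σ a y r := by
  induction r with
  | zero => rfl
  | succ r ih => simp only [Dit, ih, map_add, add_mul]

lemma Dit_sub (a x y : F) (r : ℕ) : Dit σ a (x - y) r = Dit σ a x r - Dit σ a y r := by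
  induction r with
  | zero => rfl
  | succ r ih => simp only [Dit, ih, map_sub, sub_mul]

lemma Dit_mul_left (a u x : F) (r : ℕ) : Dit σ a (u * x) r = (σ ^ r) u * Dit σ a x r := by
  induction r with
  | zero => rfl
  | succ r ih => simp only [Dit, ih, map_mul, pow_succ', RingAut.mul_apply, mul_assoc]

lemma Dit_succ' (a x : F) (r : ℕ) : Dit σ a x (r + 1) = Dit σ a (σ x * a) r := by
  induction r with
  | zero => rfl
  | succ r ih => rw [Dit, ih, Dit]

lemma Dit_conj_mul (a x : F) {y : F} (hy : y ≠ 0) (r : ℕ) :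
    Dit σ (σ y * a * y⁻¹) x r * y = Dit σ a (x * y) r := by
  induction r with
  | zero => rfl
  | succ r ih =>
    simp only [Dit, ← ih, map_mul]
    field_simp

lemma Dit_one (b : F) (r : ℕ) : Dit σ b 1 r = ∏ t ∈ range r, (σ ^ t) b := by
  induction r with
  | zero => rfl
  | succ r ih =>
    rw [Dit, ih, map_prod, prod_range_succ' _ r]
    simp only [pow_succ', RingAut.mul_apply, pow_zero, RingAut.one_apply]

lemma pow_apply_of_apply_eq {u : F} (hu : σ u = u) (r : ℕ) : (σ ^ r) u = u := by
  rw [RingAut.coe_pow, Function.iterate_fixed hu]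

abbrev fixedSubfield : Subfield F := (σ : F →+* F).eqLocusField (RingHom.id F)

/-- The operator `P(D_α)` of the skew polynomial `P = ∑_{r<k} c_r t^r`. -/
def opEval (c : ℕ → F) (k : ℕ) (α : F) : F →ₗ[fixedSubfield σ] F where
  toFun x := ∑ r ∈ range k, c r * Dit σ α x r
  map_add' x y := by simp only [Dit_add, mul_add, sum_add_distrib]
  map_smul' u x := by
    simp only [Subfield.smul_def, smul_eq_mul, Dit_mul_left, pow_apply_of_apply_eq σ u.2,
      mul_sum, RingHom.id_apply]
    exact sum_congr rfl fun r _ => by ring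

lemma opEval_apply (c : ℕ → F) (k : ℕ) (α x : F) :
    opEval σ c k α x = ∑ r ∈ range k, c r * Dit σ α x r := rfl

def linFactor (b α : F) : F →ₗ[fixedSubfield σ] F where
  toFun x := σ x * α - b * x
  map_add' x y := by simp only [map_add]; ring
  map_smul' u x := by
    simp only [Subfield.smul_def, smul_eq_mul, map_mul, RingHom.id_apply]
    rw [show σ u = u from u.2]
    ring

/-- `quotCoeff σ c k b (s + 1)` is the coefficient of `t^s` in the right quotient of
`∑_{u ≤ k} c_u t^u` by `t - b` in `F[t; σ]`, where `t · u = σ(u) · t`. -/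
def quotCoeff (c : ℕ → F) (k : ℕ) (b : F) (s : ℕ) : F :=
  ∑ u ∈ Ico s (k + 1), c u * ∏ t ∈ Ico s u, (σ ^ t) b

def IsSigmaConj (a b : F) : Prop := ∃ c : F, c ≠ 0 ∧ σ c * a * c⁻¹ = b

variable {σ}

lemma quotCoeff_of_le {c : ℕ → F} {k : ℕ} (b : F) {s : ℕ} (hs : s ≤ k) :
    quotCoeff σ c k b s = c s + (σ ^ s) b * quotCoeff σ c k b (s + 1) := by
  rw [quotCoeff, sum_eq_sum_Ico_succ_bot (by omega), quotCoeff, mul_sum, Ico_self, prod_empty,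
    mul_one]
  congr 1
  refine sum_congr rfl fun u hu => ?_
  rw [prod_eq_prod_Ico_succ_bot (by have := (mem_Ico.1 hu).1; omega)]
  ring

lemma quotCoeff_succ_self (c : ℕ → F) (k : ℕ) (b : F) : quotCoeff σ c k b (k + 1) = 0 := by
  simp [quotCoeff]

lemma quotCoeff_zero (c : ℕ → F) (k : ℕ) (b : F) :
    quotCoeff σ c k b 0 = opEval σ c (k + 1) b 1 := by
  simp only [quotCoeff, opEval_apply, Dit_one, range_eq_Ico]

lemma opEval_eq_comp_linFactor {c : ℕ → F} {k : ℕ} {b : F} (hb : opEval σ c (k + 1) b 1 = 0)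
    (α : F) :
    opEval σ c (k + 1) α =
      opEval σ (fun s => quotCoeff σ c k b (s + 1)) k α ∘ₗ linFactor σ b α := by
  ext x
  have step : ∀ s ∈ range k, quotCoeff σ c k b (s + 1) * Dit σ α (σ x * α - b * x) s =
      (quotCoeff σ c k b (s + 1) * Dit σ α x (s + 1) - quotCoeff σ c k b s * Dit σ α x s) +
        c s * Dit σ α x s := by
    intro s hs
    rw [Dit_sub, Dit_mul_left σ α b, ← Dit_succ', quotCoeff_of_le b (mem_range.1 hs).le]
    ring
  change _ = ∑ s ∈ range k, quotCoeff σ c k b (s + 1) * Dit σ α (σ x * α - b * x) s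
  rw [sum_congr rfl step, sum_add_distrib,
    sum_range_sub (fun s => quotCoeff σ c k b s * Dit σ α x s),
    quotCoeff_zero, hb, quotCoeff_of_le b le_rfl, quotCoeff_succ_self, opEval_apply,
    sum_range_succ]
  ring

lemma exists_quotCoeff_ne_zero {c : ℕ → F} {k : ℕ} {b : F} (hb : opEval σ c (k + 1) b 1 = 0)
    (hc : ∃ r < k + 1, c r ≠ 0) : ∃ s < k, quotCoeff σ c k b (s + 1) ≠ 0 := by
  by_contra! hg
  have hg' : ∀ s ≤ k + 1, quotCoeff σ c k b s = 0 := by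
    rintro (_ | s) hs
    · rw [quotCoeff_zero, hb]
    · rcases (Nat.succ_le_succ_iff.1 hs).lt_or_eq with hs | hs
      · exact hg s hs
      · rw [hs]; exact quotCoeff_succ_self c k b
  obtain ⟨r, hr, hcr⟩ := hc
  have hrec := quotCoeff_of_le (σ := σ) (c := c) b (Nat.lt_succ_iff.1 hr)
  rw [hg' r hr.le, hg' (r + 1) hr] at hrec
  exact hcr (by simpa using hrec.symm)

lemma IsSigmaConj.of_conj_right {a b y : F} (hy : y ≠ 0)
    (h : IsSigmaConj σ a (σ y * b * y⁻¹)) : IsSigmaConj σ a b := by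
  obtain ⟨c, hc, hcab⟩ := h
  refine ⟨y⁻¹ * c, mul_ne_zero (inv_ne_zero hy) hc, ?_⟩
  have hσy : σ y ≠ 0 := (map_ne_zero σ).2 hy
  rw [map_mul, map_inv₀]
  field_simp at hcab ⊢
  linear_combination hcab

lemma ker_linFactor_eq_bot {b α : F} (h : ¬ IsSigmaConj σ α b) :
    ker (linFactor σ b α) = ⊥ := by
  refine ker_eq_bot'.2 fun x hx => by_contra fun hx0 => h ⟨x, hx0, ?_⟩
  have hx : σ x * α - b * x = 0 := hx
  field_simp
  linear_combination hx

lemma ker_linFactor_conj_le_span {α y : F} (hα : α ≠ 0) (hy : y ≠ 0) :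
    ker (linFactor σ (σ y * α * y⁻¹) α) ≤ Submodule.span (fixedSubfield σ) {y} := by
  intro x hx
  have hx : σ x * α - σ y * α * y⁻¹ * x = 0 := hx
  have hσy : σ y ≠ 0 := (map_ne_zero σ).2 hy
  have hfix : σ (x * y⁻¹) = x * y⁻¹ := by
    rw [map_mul, map_inv₀]
    field_simp at hx ⊢
    exact mul_left_cancel₀ hα (by linear_combination hx)
  rw [Submodule.mem_span_singleton]
  exact ⟨⟨x * y⁻¹, hfix⟩, by simp [Subfield.smul_def, hy]⟩

lemma opEval_conj_one_eq_zero {c : ℕ → F} {k : ℕ} {α y : F} (hy : y ≠ 0)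
    (h : opEval σ c k α y = 0) : opEval σ c k (σ y * α * y⁻¹) 1 = 0 := by
  refine (mul_eq_zero.1 ?_).resolve_right hy
  rw [← h, opEval_apply, opEval_apply, sum_mul]
  refine sum_congr rfl fun r _ => ?_
  rw [mul_assoc, Dit_conj_mul σ α 1 hy, one_mul]

section RankBound

variable {ℓ : ℕ} {a : Fin ℓ → F}

lemma sum_rank_ker_linFactor_le_one (ha0 : ∀ i, a i ≠ 0)
    (hconj : ∀ i i', i ≠ i' → ¬ IsSigmaConj σ (a i) (a i')) {i : Fin ℓ} {y : F} (hy : y ≠ 0) :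
    ∑ j, Module.rank (fixedSubfield σ) (ker (linFactor σ (σ y * a i * y⁻¹) (a j))) ≤ 1 := by
  rw [sum_eq_single i]
  · calc _ ≤ Module.rank (fixedSubfield σ) (Submodule.span (fixedSubfield σ) {y}) :=
          Submodule.rank_mono (ker_linFactor_conj_le_span (ha0 i) hy)
      _ ≤ 1 := by simpa using rank_span_le (R := fixedSubfield σ) {y}
  · intro j _ hji
    rw [ker_linFactor_eq_bot fun h => hconj j i hji (h.of_conj_right hy), rank_bot]
  · simp

lemma sum_rank_ker_opEval_add_one_le (ha0 : ∀ i, a i ≠ 0)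
    (hconj : ∀ i i', i ≠ i' → ¬ IsSigmaConj σ (a i) (a i')) (k : ℕ) {c : ℕ → F}
    (hc : ∃ r < k, c r ≠ 0) :
    ∑ i, Module.rank (fixedSubfield σ) (ker (opEval σ c k (a i))) + 1 ≤ k := by
  induction k generalizing c with
  | zero => simp at hc
  | succ k ih =>
    by_cases hker : ∀ i, ker (opEval σ c (k + 1) (a i)) = ⊥
    · rw [sum_eq_zero fun i _ => by rw [hker i, rank_bot], zero_add]
      exact_mod_cast Nat.le_add_left 1 k
    push Not at hker
    obtain ⟨i, hi⟩ := hker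
    obtain ⟨y, hyk, hy0⟩ := Submodule.exists_mem_ne_zero_of_ne_bot hi
    have hroot := opEval_conj_one_eq_zero hy0 hyk
    calc ∑ j, Module.rank (fixedSubfield σ) (ker (opEval σ c (k + 1) (a j))) + 1
        ≤ ∑ j, (Module.rank (fixedSubfield σ) (ker (linFactor σ (σ y * a i * y⁻¹) (a j))) +
            Module.rank (fixedSubfield σ)
              (ker (opEval σ (fun s => quotCoeff σ c k (σ y * a i * y⁻¹) (s + 1)) k (a j)))) +
            1 := by
          gcongr with j
          rw [opEval_eq_comp_linFactor hroot]
          exact rank_ker_comp_le _ _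
      _ ≤ 1 + k := by
          rw [sum_add_distrib, add_assoc]
          exact add_le_add (sum_rank_ker_linFactor_le_one ha0 hconj hy0)
            (ih (exists_quotCoeff_ne_zero hroot hc))
      _ = (k + 1 : ℕ) := by push_cast; ring

end RankBound

lemma linearIndependent_fixedSubfield {ι : Type*} [Fintype ι] {v : ι → F}
    (hv : ∀ c : ι → F, (∀ j, σ (c j) = c j) → ∑ j, c j * v j = 0 → ∀ j, c j = 0) :
    LinearIndependent (fixedSubfield σ) v :=
  Fintype.linearIndependent_iff.2 fun g hg j =>
    Subtype.ext (hv (fun j => g j) (fun j => (g j).2) hg j)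

lemma linearIndependent_moore_rows {ℓ d : ℕ} {nv : Fin ℓ → ℕ} {a : Fin ℓ → F}
    (ha0 : ∀ i, a i ≠ 0) (hconj : ∀ i i', i ≠ i' → ¬ IsSigmaConj σ (a i) (a i'))
    {x : ∀ i, Fin (nv i) → F} (hx : ∀ i, LinearIndependent (fixedSubfield σ) (x i))
    (hd : d ≤ ∑ i, nv i) :
    LinearIndependent F fun (r : Fin d) (col : (i : Fin ℓ) × Fin (nv i)) =>
      Dit σ (a col.1) (x col.1 col.2) r := by
  refine Fintype.linearIndependent_iff.2 fun c hc => by_contra fun hc0 => ?_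
  push Not at hc0
  obtain ⟨r₀, hr₀⟩ := hc0
  let c' : ℕ → F := fun r => if h : r < d then c ⟨r, h⟩ else 0
  have hker : ∀ i,
      (nv i : Cardinal) ≤ Module.rank (fixedSubfield σ) (ker (opEval σ c' d (a i))) := by
    intro i
    rw [← rank_span_range_fin (hx i)]
    refine Submodule.rank_mono (Submodule.span_le.2 ?_)
    rintro _ ⟨j, rfl⟩
    have hcol := congrFun hc ⟨i, j⟩
    simp only [Finset.sum_apply, Pi.smul_apply, smul_eq_mul, Pi.zero_apply] at hcol
    rw [SetLike.mem_coe, mem_ker, opEval_apply, ← Fin.sum_univ_eq_sum_range, ← hcol]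
    simp [c']
  have hbound := sum_rank_ker_opEval_add_one_le ha0 hconj d (c := c')
    ⟨r₀, r₀.2, by simpa [c'] using hr₀⟩
  have hcard : ((∑ i, nv i + 1 : ℕ) : Cardinal) ≤ d := by
    push_cast
    exact (add_le_add_left (sum_le_sum fun i _ => hker i) 1).trans hbound
  have := Nat.cast_le.1 hcard
  omega

end GeneralizedMoore

theorem stmt_6_general (F : Type*) [Field F] (σ : F ≃+* F)
    (ℓ d : ℕ) (nv : Fin ℓ → ℕ) (a : Fin ℓ → F)
    (ha0 : ∀ i, a i ≠ 0)
    (hconj : ∀ i i' : Fin ℓ, i ≠ i' →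
      ¬ ∃ c : F, c ≠ 0 ∧ σ c * a i * c⁻¹ = a i')
    (x : ∀ i : Fin ℓ, Fin (nv i) → F)
    (hx : ∀ i (c : Fin (nv i) → F), (∀ j, σ (c j) = c j) →
      (∑ j, c j * x i j) = 0 → ∀ j, c j = 0) :
    (Matrix.of fun (r : Fin d) (c : (i : Fin ℓ) × Fin (nv i)) =>
        Dit σ (a c.1) (x c.1 c.2) r.1).rank = min d (∑ i, nv i) := by
  set M := Matrix.of fun (r : Fin d) (c : (i : Fin ℓ) × Fin (nv i)) =>
    Dit σ (a c.1) (x c.1 c.2) r.1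
  refine le_antisymm (le_min ?_ ?_) ?_
  · simpa using M.rank_le_card_height
  · simpa using M.rank_le_card_width
  · have hrows := GeneralizedMoore.linearIndependent_moore_rows ha0 hconj
      (fun i => GeneralizedMoore.linearIndependent_fixedSubfield (hx i)) (min_le_right d _)
    rw [← Fintype.card_fin (min d _), ← hrows.rank_matrix]
    exact M.rank_submatrix_le (Fin.castLE (min_le_left d _)) _root_.id

/-- The generalized Moore matrix built from representatives of pairwise distinct
nontrivial (σ,0)-conjugacy classes and blockwise `F_q`-linearly independent entries
(`F_q` = fixed field of `σ`) has `F_{q^m}`-rank `min(d, n_1 + ... + n_ℓ)`. -/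
theorem stmt_6 (F : Type*) [Field F] [Fintype F] (σ : F ≃+* F)
    (ℓ d : ℕ) (nv : Fin ℓ → ℕ) (a : Fin ℓ → F)
    (ha0 : ∀ i, a i ≠ 0)
    (hconj : ∀ i i' : Fin ℓ, i ≠ i' →
      ¬ ∃ c : F, c ≠ 0 ∧ σ c * a i * c⁻¹ = a i')
    (x : ∀ i : Fin ℓ, Fin (nv i) → F)
    (hx : ∀ i (c : Fin (nv i) → F), (∀ j, σ (c j) = c j) →
      (∑ j, c j * x i j) = 0 → ∀ j, c j = 0) :
    (Matrix.of fun (r : Fin d) (c : (i : Fin ℓ) × Fin (nv i)) =>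
        Dit σ (a c.1) (x c.1 c.2) r.1).rank = min d (∑ i, nv i) :=
  stmt_6_general F σ ℓ d nv a ha0 hconj x hx
end

section
/- Let f be a nonzero skew polynomial in F_{q^m}[x; σ] (zero derivation), let a_1, ..., a_ℓ be representatives of pairwise distinct nontrivial (σ,0)-conjugacy classes of F_{q^m}, and for each i let ζ^{(i)}_1, ..., ζ^{(i)}_{n_i} ∈ F_{q^m} be F_q-linearly independent. If the generalized operator evaluation f(ζ^{(i)}_j)_{a_i} := Σ_r f_r D_{a_i}^r(ζ^{(i)}_j) vanishes for all 1 ≤ j ≤ n_i and all 1 ≤ i ≤ ℓ, then deg(f) ≥ n_1 + ... + n_ℓ. -/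
/-- Generalized operator evaluation of a skew polynomial (given by its coefficients)
at `b` with respect to evaluation parameter `a`. -/
noncomputable def opev {F : Type*} [Field F] (σ : F ≃+* F) (f : Polynomial F)
    (a b : F) : F :=
  ∑ r ∈ f.support, f.coeff r * Dit σ a b r

open Polynomial

section Evaluation

variable {F : Type*} [Field F] (σ : F ≃+* F)

theorem Dit_sub (a u v : F) : ∀ r, Dit σ a (u - v) r = Dit σ a u r - Dit σ a v r
  | 0 => rfl
  | r + 1 => by simp only [Dit, Dit_sub a u v r, map_sub, sub_mul]

theorem Dit_mul_left (a c b : F) : ∀ r, Dit σ a (c * b) r = σ^[r] c * Dit σ a b r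
  | 0 => by simp [Dit]
  | r + 1 => by
    simp only [Dit, Dit_mul_left a c b r, map_mul, Function.iterate_succ_apply', mul_assoc]

theorem Dit_succ' (a b : F) : ∀ r, Dit σ a b (r + 1) = Dit σ a (σ b * a) r
  | 0 => rfl
  | r + 1 => by rw [Dit, Dit_succ' a b r, Dit]

theorem opev_eq_sum_range (f : F[X]) (a b : F) {n : ℕ} (hn : f.natDegree < n) :
    opev σ f a b = ∑ r ∈ Finset.range n, f.coeff r * Dit σ a b r :=
  sum_over_range' f (f := fun r e ↦ e * Dit σ a b r) (fun _ ↦ zero_mul _) n hn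

theorem opev_add (p q : F[X]) (a b : F) :
    opev σ (p + q) a b = opev σ p a b + opev σ q a b := by
  have hn := natDegree_add_le p q
  simp only [opev_eq_sum_range σ _ a b (Nat.lt_succ_of_le hn),
    opev_eq_sum_range σ _ a b (Nat.lt_succ_of_le (le_max_left p.natDegree q.natDegree)),
    opev_eq_sum_range σ _ a b (Nat.lt_succ_of_le (le_max_right p.natDegree q.natDegree)),
    coeff_add, add_mul, Finset.sum_add_distrib]

theorem opev_sub (p q : F[X]) (a b : F) :
    opev σ (p - q) a b = opev σ p a b - opev σ q a b := by
  have hn := natDegree_sub_le p q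
  simp only [opev_eq_sum_range σ _ a b (Nat.lt_succ_of_le hn),
    opev_eq_sum_range σ _ a b (Nat.lt_succ_of_le (le_max_left p.natDegree q.natDegree)),
    opev_eq_sum_range σ _ a b (Nat.lt_succ_of_le (le_max_right p.natDegree q.natDegree)),
    coeff_sub, sub_mul, Finset.sum_sub_distrib]

theorem opev_C (ρ a b : F) : opev σ (C ρ) a b = ρ * b := by
  simp [opev_eq_sum_range σ (C ρ) a b (n := 1) (by simp), Dit]

theorem opev_sub_right (f : F[X]) (a u v : F) :
    opev σ f a (u - v) = opev σ f a u - opev σ f a v := by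
  simp only [opev, Dit_sub, mul_sub, Finset.sum_sub_distrib]

theorem opev_zero_right (f : F[X]) (a : F) : opev σ f a 0 = 0 := by
  simpa using opev_sub_right σ f a 0 0

theorem opev_mul_X (g : F[X]) (a b : F) : opev σ (g * X) a b = opev σ g a (σ b * a) := by
  have hn : (g * X).natDegree < g.natDegree + 2 :=
    natDegree_mul_le.trans_lt (by rw [natDegree_X]; omega)
  rw [opev_eq_sum_range σ _ a b hn,
    opev_eq_sum_range σ g a _ (Nat.lt_succ_self _), Finset.sum_range_succ']
  simp [coeff_mul_X, Dit_succ']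

end Evaluation

section SkewDivision

variable {F : Type*} [Field F] (σ : F ≃+* F)

/-- The skew product `g · c` in `F[x; σ]`, using `x ^ r · c = σ^r(c) x ^ r`. -/
noncomputable def skewMulC (c : F) (g : F[X]) : F[X] :=
  ∑ r ∈ g.support, monomial r (g.coeff r * σ^[r] c)

/-- The skew product `g · (x - c)` in `F[x; σ]`. -/
noncomputable def skewMulXSubC (c : F) (g : F[X]) : F[X] :=
  g * X - skewMulC σ c g

theorem coeff_skewMulC (c : F) (g : F[X]) (r : ℕ) :
    (skewMulC σ c g).coeff r = g.coeff r * σ^[r] c := by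
  by_cases hr : r ∈ g.support
  · simp [skewMulC, coeff_monomial, hr]
  · simp [skewMulC, coeff_monomial, hr, notMem_support_iff.mp hr]

theorem skewMulXSubC_add (c : F) (g h : F[X]) :
    skewMulXSubC σ c (g + h) = skewMulXSubC σ c g + skewMulXSubC σ c h := by
  have : skewMulC σ c (g + h) = skewMulC σ c g + skewMulC σ c h := by
    ext r; simp only [coeff_skewMulC, coeff_add, add_mul]
  simp only [skewMulXSubC, this, add_mul]
  ring

theorem skewMulXSubC_zero (c : F) : skewMulXSubC σ c 0 = 0 := by
  simp [skewMulXSubC, skewMulC]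

theorem natDegree_skewMulC_le (c : F) (g : F[X]) :
    (skewMulC σ c g).natDegree ≤ g.natDegree :=
  natDegree_le_iff_coeff_eq_zero.mpr fun r hr ↦ by
    rw [coeff_skewMulC, coeff_eq_zero_of_natDegree_lt (by exact_mod_cast hr), zero_mul]

theorem natDegree_skewMulXSubC {g : F[X]} (hg : g ≠ 0) (c : F) :
    (skewMulXSubC σ c g).natDegree = g.natDegree + 1 := by
  have hX := natDegree_mul_X hg
  rw [skewMulXSubC, natDegree_sub_eq_left_of_natDegree_lt, hX]
  rw [hX]
  exact Nat.lt_succ_of_le (natDegree_skewMulC_le σ c g)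

theorem exists_eq_skewMulXSubC_add_C (c : F) (f : F[X]) :
    ∃ g ρ, f = skewMulXSubC σ c g + C ρ := by
  induction hn : f.natDegree using Nat.strong_induction_on generalizing f with
  | _ n ih =>
  rcases Nat.eq_zero_or_pos n with rfl | hpos
  · exact ⟨0, f.coeff 0, by rw [skewMulXSubC_zero, zero_add, ← eq_C_of_natDegree_eq_zero hn]⟩
  · have hlt : (skewMulC σ c f.divX).natDegree < n :=
      (natDegree_skewMulC_le σ c _).trans_lt (by rw [natDegree_divX_eq_natDegree_tsub_one]; omega)
    obtain ⟨g, ρ, hg⟩ := ih _ hlt _ rfl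
    refine ⟨f.divX + g, ρ + f.coeff 0, ?_⟩
    calc f = f.divX * X + C (f.coeff 0) := (divX_mul_X_add f).symm
      _ = skewMulXSubC σ c f.divX + skewMulC σ c f.divX + C (f.coeff 0) := by
        rw [skewMulXSubC]; ring
      _ = skewMulXSubC σ c (f.divX + g) + C (ρ + f.coeff 0) := by
        rw [hg, skewMulXSubC_add, C_add]; ring

theorem opev_skewMulC (c : F) (g : F[X]) (a b : F) :
    opev σ (skewMulC σ c g) a b = opev σ g a (c * b) := by
  have hn := Nat.lt_succ_of_le (natDegree_skewMulC_le σ c g)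
  rw [opev_eq_sum_range σ _ a b hn, opev_eq_sum_range σ g a _ (Nat.lt_succ_self _)]
  simp only [coeff_skewMulC, Dit_mul_left, mul_assoc]

theorem opev_skewMulXSubC (c : F) (g : F[X]) (a b : F) :
    opev σ (skewMulXSubC σ c g) a b = opev σ g a (σ b * a - c * b) := by
  rw [skewMulXSubC, opev_sub, opev_mul_X, opev_skewMulC, opev_sub_right]

end SkewDivision

section Conjugacy

variable {F : Type*} [Field F] (σ : F ≃+* F)

def fixedSubfield : Subfield F := (σ : F →+* F).eqLocusField (RingHom.id F)

theorem mem_fixedSubfield {x : F} : x ∈ fixedSubfield σ ↔ σ x = x := Iff.rfl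

def SigmaConj (a b : F) : Prop := ∃ c : F, c ≠ 0 ∧ σ c * a * c⁻¹ = b

theorem linearIndependent_fixedSubfield_iff {ι : Type*} [Fintype ι] (v : ι → F) :
    LinearIndependent (fixedSubfield σ) v ↔
      ∀ c : ι → F, (∀ j, σ (c j) = c j) → ∑ j, c j * v j = 0 → ∀ j, c j = 0 := by
  rw [Fintype.linearIndependent_iff]
  constructor
  · intro h c hc hsum j
    exact congrArg Subtype.val (h (fun j ↦ ⟨c j, hc j⟩) hsum j)
  · intro h g hsum j
    exact Subtype.ext (h (fun j ↦ g j) (fun j ↦ (g j).2) hsum j)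

/-- The operator `D_a - c`. -/
def Dsub (a c : F) : F →ₗ[fixedSubfield σ] F where
  toFun b := σ b * a - c * b
  map_add' u v := by simp only [map_add]; ring
  map_smul' k b := by
    change σ (k * b) * a - c * (k * b) = k * (σ b * a - c * b)
    rw [map_mul, (mem_fixedSubfield σ).mp k.2]
    ring

theorem Dsub_apply (a c b : F) : Dsub σ a c b = σ b * a - c * b := rfl

theorem conj_div_of_mem_ker_Dsub {a a' ζ u : F} (hζ : ζ ≠ 0) (hu : u ≠ 0)
    (h : u ∈ LinearMap.ker (Dsub σ a' (σ ζ * a * ζ⁻¹))) :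
    σ (u / ζ) * a' * (u / ζ)⁻¹ = a := by
  have hσζ : σ ζ ≠ 0 := (map_ne_zero σ).mpr hζ
  have h' : σ u * a' = σ ζ * a * ζ⁻¹ * u := sub_eq_zero.mp h
  rw [map_div₀]
  field_simp
  field_simp at h'
  linear_combination h'

theorem ker_Dsub_eq_bot {a a' ζ : F} (hζ : ζ ≠ 0) (h : ¬ SigmaConj σ a' a) :
    LinearMap.ker (Dsub σ a' (σ ζ * a * ζ⁻¹)) = ⊥ :=
  (Submodule.eq_bot_iff _).mpr fun u hu ↦ by
    by_contra hu0
    exact h ⟨u / ζ, div_ne_zero hu0 hζ, conj_div_of_mem_ker_Dsub σ hζ hu0 hu⟩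

theorem ker_Dsub_le_span {a ζ : F} (ha : a ≠ 0) (hζ : ζ ≠ 0) :
    LinearMap.ker (Dsub σ a (σ ζ * a * ζ⁻¹)) ≤ (fixedSubfield σ) ∙ ζ := by
  intro u hu
  rcases eq_or_ne u 0 with rfl | hu0
  · exact Submodule.zero_mem _
  have hconj := conj_div_of_mem_ker_Dsub σ hζ hu0 hu
  have hfix : σ (u / ζ) = u / ζ := by
    field_simp at hconj
    exact eq_div_of_mul_eq hζ (by linear_combination hconj)
  exact Submodule.mem_span_singleton.mpr ⟨⟨u / ζ, hfix⟩, div_mul_cancel₀ u hζ⟩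

end Conjugacy

section Independence

variable {F : Type*} [Field F] (σ : F ≃+* F) {ι : Type*}

theorem LinearIndepOn.Dsub_comp_of_not_sigmaConj {v : ι → F} {S : Set ι}
    (hv : LinearIndepOn (fixedSubfield σ) v S) {a a' ζ : F} (hζ : ζ ≠ 0)
    (h : ¬ SigmaConj σ a' a) :
    LinearIndepOn (fixedSubfield σ) (Dsub σ a' (σ ζ * a * ζ⁻¹) ∘ v) S :=
  LinearIndependent.map' hv _ (ker_Dsub_eq_bot σ hζ h)

theorem LinearIndepOn.Dsub_comp_of_insert {v : ι → F} {S : Set ι} {x : ι} (hx : x ∉ S)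
    (hv : LinearIndepOn (fixedSubfield σ) v (insert x S)) {a : F} (ha : a ≠ 0) :
    LinearIndepOn (fixedSubfield σ) (Dsub σ a (σ (v x) * a * (v x)⁻¹) ∘ v) S := by
  have hvx : v x ≠ 0 := hv.ne_zero (Set.mem_insert x S)
  obtain ⟨hS, hnotin⟩ := (linearIndepOn_insert hx).mp hv
  have hdisj : Disjoint (Submodule.span (fixedSubfield σ) (v '' S))
      (LinearMap.ker (Dsub σ a (σ (v x) * a * (v x)⁻¹))) :=
    ((Submodule.disjoint_span_singleton' hvx).mpr hnotin).mono_right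
      (ker_Dsub_le_span σ ha hvx)
  exact hS.map_injOn _ (LinearMap.injOn_of_disjoint_ker le_rfl hdisj)

end Independence

theorem card_le_natDegree_of_opev_eq_zero {F : Type*} [Field F] (σ : F ≃+* F)
    {ι κ : Type*} (cls : ι → κ) (a : κ → F) (ha0 : ∀ k, a k ≠ 0)
    (hconj : ∀ k k', k ≠ k' → ¬ SigmaConj σ (a k) (a k'))
    (s : Finset ι) (z : ι → F)
    (hz : ∀ k, LinearIndepOn (fixedSubfield σ) z (↑s ∩ cls ⁻¹' {k}))
    (f : F[X]) (hf : f ≠ 0) (hvanish : ∀ x ∈ s, opev σ f (a (cls x)) (z x) = 0) :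
    s.card ≤ f.natDegree := by
  classical
  induction s using Finset.induction_on generalizing f z with
  | empty => exact Nat.zero_le _
  | insert x t hx ih =>
  set ζ := z x
  -- chosen so that `D_{a (cls x)} - c` kills `ζ`, which forces the remainder to vanish
  set c := σ ζ * a (cls x) * ζ⁻¹
  have hzx : LinearIndepOn (fixedSubfield σ) z (insert x (↑t ∩ cls ⁻¹' {cls x})) := by
    simpa [Set.insert_inter_of_mem] using hz (cls x)
  have hζ : ζ ≠ 0 := hzx.ne_zero (Set.mem_insert x _)
  obtain ⟨g, ρ, rfl⟩ := exists_eq_skewMulXSubC_add_C σ c f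
  have hρ : ρ = 0 := by
    have hDζ : σ ζ * a (cls x) - c * ζ = 0 := by simp only [c]; field_simp; ring
    have := hvanish x (Finset.mem_insert_self x t)
    rw [opev_add, opev_skewMulXSubC, opev_C, hDζ, opev_zero_right, zero_add] at this
    exact (mul_eq_zero.mp this).resolve_right hζ
  subst hρ
  rw [map_zero, add_zero] at hf hvanish ⊢
  have hg : g ≠ 0 := by rintro rfl; exact hf (skewMulXSubC_zero σ c)
  rw [Finset.card_insert_of_notMem hx, natDegree_skewMulXSubC σ hg, Nat.add_le_add_iff_right]
  refine ih (fun y ↦ Dsub σ (a (cls y)) c (z y)) (fun k ↦ ?_) g hg fun y hy ↦ ?_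
  · have hcls : Set.EqOn (fun y ↦ Dsub σ (a (cls y)) c (z y)) (Dsub σ (a k) c ∘ z)
        (↑t ∩ cls ⁻¹' {k}) := fun y hy ↦ by
      simp only [Function.comp_apply, show cls y = k from hy.2]
    refine (linearIndepOn_congr hcls).mpr ?_
    rcases eq_or_ne k (cls x) with rfl | hk
    · exact hzx.Dsub_comp_of_insert σ (fun h ↦ hx h.1) (ha0 _)
    · refine ((hz k).mono ?_).Dsub_comp_of_not_sigmaConj σ hζ (hconj k (cls x) hk)
      exact Set.inter_subset_inter_left _ (by simp)
  · rw [Dsub_apply, ← opev_skewMulXSubC]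
    exact hvanish y (Finset.mem_insert_of_mem hy)

theorem stmt_7_general (F : Type*) [Field F] (σ : F ≃+* F)
    (f : Polynomial F) (hf : f ≠ 0)
    (ℓ : ℕ) (nv : Fin ℓ → ℕ) (a : Fin ℓ → F)
    (ha0 : ∀ i, a i ≠ 0)
    (hconj : ∀ i i' : Fin ℓ, i ≠ i' →
      ¬ ∃ c : F, c ≠ 0 ∧ σ c * a i * c⁻¹ = a i')
    (ζ : ∀ i : Fin ℓ, Fin (nv i) → F)
    (hζ : ∀ i (c : Fin (nv i) → F), (∀ j, σ (c j) = c j) →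
      (∑ j, c j * ζ i j) = 0 → ∀ j, c j = 0)
    (hvanish : ∀ i j, opev σ f (a i) (ζ i j) = 0) :
    (∑ i, nv i) ≤ f.natDegree := by
  have hind : ∀ i, LinearIndepOn (fixedSubfield σ) (fun p : Σ i, Fin (nv i) ↦ ζ p.1 p.2)
      (↑(Finset.univ : Finset (Σ i, Fin (nv i))) ∩ Sigma.fst ⁻¹' {i}) := fun i ↦ by
    rw [Finset.coe_univ, Set.univ_inter, ← Set.range_sigmaMk,
      linearIndepOn_range_iff sigma_mk_injective]
    exact (linearIndependent_fixedSubfield_iff σ (ζ i)).mpr (hζ i)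
  simpa using card_le_natDegree_of_opev_eq_zero σ Sigma.fst a ha0 hconj Finset.univ _ hind f hf
    fun p _ ↦ hvanish p.1 p.2

/-- A nonzero skew polynomial vanishing (under generalized operator evaluation) at
`n_i` `F_q`-linearly independent points for each of `ℓ` pairwise distinct nontrivial
conjugacy classes has degree at least `n_1 + ... + n_ℓ`. -/
theorem stmt_7 (F : Type*) [Field F] [Fintype F] (σ : F ≃+* F)
    (f : Polynomial F) (hf : f ≠ 0)
    (ℓ : ℕ) (nv : Fin ℓ → ℕ) (a : Fin ℓ → F)
    (ha0 : ∀ i, a i ≠ 0)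
    (hconj : ∀ i i' : Fin ℓ, i ≠ i' →
      ¬ ∃ c : F, c ≠ 0 ∧ σ c * a i * c⁻¹ = a i')
    (ζ : ∀ i : Fin ℓ, Fin (nv i) → F)
    (hζ : ∀ i (c : Fin (nv i) → F), (∀ j, σ (c j) = c j) →
      (∑ j, c j * ζ i j) = 0 → ∀ j, c j = 0)
    (hvanish : ∀ i j, opev σ f (a i) (ζ i j) = 0) :
    (∑ i, nv i) ≤ f.natDegree :=
  stmt_7_general F σ f hf ℓ nv a ha0 hconj ζ hζ hvanish
end

section
/- For the root-finding step of the FLRS decoder, the dimension d_RF of the F_{q^m}-solution space of the root-finding system satisfies d_RF ≤ s − 1, hence the list of candidate message polynomials has size at most q^{m(s−1)}. -/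
/-!
Restricting a kernel vector `f` to the rows `(a, 0)` of the block lower triangular system, the
diagonal entry of row `a` is (up to the automorphism `σ⁻ᵃ`) the value `B₀⁽⁰⁾(σᵃ(γ))`. Wherever it is
nonzero, forward substitution determines `f a` from the earlier coordinates, so a kernel vector is
determined by its values at the diagonal zeros. These are roots of `B₀⁽⁰⁾` at distinct points, so
there are at most `s - 1` of them; the solution set of `B f = q` is empty or a coset of the kernel.
-/

open Finset Polynomial

namespace Matrix

variable {m n R : Type*} [Fintype n] [LinearOrder n]

theorem eq_zero_of_mulVec_eq_zero_of_triangular [Semiring R] [NoZeroDivisors R]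
    (M : Matrix m n R) (r : n → m) (htri : ∀ a c, a < c → M (r a) c = 0)
    {f : n → R} (hf : M *ᵥ f = 0) (hdiag : ∀ a, M (r a) a = 0 → f a = 0) : f = 0 := by
  suffices ∀ a, f a = 0 from funext this
  intro a
  induction a using WellFoundedLT.induction with
  | ind a ih =>
    by_cases ha : M (r a) a = 0
    · exact hdiag a ha
    have hrow : M (r a) a * f a = 0 := calc
      _ = (M *ᵥ f) (r a) := by
        rw [mulVec, dotProduct, sum_eq_single_of_mem a (mem_univ a)]
        intro c _ hca
        rcases hca.lt_or_gt with hlt | hgt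
        · rw [ih c hlt, mul_zero]
        · rw [htri a c hgt, zero_mul]
      _ = 0 := by rw [hf, Pi.zero_apply]
    exact (mul_eq_zero.mp hrow).resolve_left ha

theorem finrank_ker_mulVecLin_le_card_diag_eq_zero [Field R] [DecidableEq R]
    (M : Matrix m n R) (r : n → m) (htri : ∀ a c, a < c → M (r a) c = 0) :
    Module.finrank R (LinearMap.ker M.mulVecLin) ≤ #{a | M (r a) a = 0} := by
  set S : Finset n := {a | M (r a) a = 0}
  let restrict : LinearMap.ker M.mulVecLin →ₗ[R] (S → R) :=
    (LinearMap.funLeft R R Subtype.val).comp (Submodule.subtype _)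
  have hinj : Function.Injective restrict := by
    rw [← LinearMap.ker_eq_bot, LinearMap.ker_eq_bot']
    intro f hf
    refine Subtype.ext (M.eq_zero_of_mulVec_eq_zero_of_triangular r htri f.2 fun a ha => ?_)
    exact congrFun hf ⟨a, mem_filter.mpr ⟨mem_univ a, ha⟩⟩
  simpa [Module.finrank_fintype_fun_eq_card] using
    LinearMap.finrank_le_finrank_of_injective hinj

end Matrix

theorem LinearMap.natCard_fiber_le_natCard_ker {R M N : Type*} [Semiring R] [AddCommGroup M]
    [AddCommGroup N] [Module R M] [Module R N] (L : M →ₗ[R] N) (y : N) :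
    Nat.card {x // L x = y} ≤ Nat.card (LinearMap.ker L) := by
  rcases isEmpty_or_nonempty {x // L x = y} with h | ⟨⟨x₀, rfl⟩⟩
  · simp
  · exact (Nat.card_congr (L.toAddMonoidHom.fiberEquivKer x₀)).le

theorem Polynomial.card_filter_isRoot_le_natDegree {R ι : Type*} [CommRing R] [IsDomain R]
    [DecidableEq R] [Fintype ι] {p : R[X]} (hp : p ≠ 0) {x : ι → R} (hx : Function.Injective x) :
    #{i | p.IsRoot (x i)} ≤ p.natDegree := by
  rw [← card_map ⟨x, hx⟩]
  refine card_le_degree_of_subset_roots fun y hy => ?_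
  obtain ⟨i, hi, rfl⟩ := mem_map.mp hy
  exact (mem_roots hp).mpr (mem_filter.mp hi).2

theorem RingEquiv.iterate_eq_zero_iff {R : Type*} [NonAssocSemiring R] (σ : R ≃+* R) (n : ℕ)
    {x : R} : (⇑σ)^[n] x = 0 ↔ x = 0 :=
  (σ.injective.iterate n).eq_iff' (iterate_map_zero σ n)

theorem stmt_13_general (q m : ℕ)
    (F : Type*) [Field F] [Fintype F] (hcard : Fintype.card F = q ^ m)
    (σ : F ≃+* F) (γ : F)
    (s k dI : ℕ) (hdI : 1 ≤ dI)
    (hdist : ∀ a b : ℕ, a < k → b < k → a ≠ b → (⇑σ)^[a] γ ≠ (⇑σ)^[b] γ)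
    (B₀ : Fin dI → Polynomial F)
    (hB₀ne : B₀ ⟨0, hdI⟩ ≠ 0)
    (hB₀deg : ∀ u, (B₀ u).natDegree ≤ s - 1)
    (Bmat : Matrix (Fin k × Fin dI) (Fin k) F)
    (htri : ∀ (a : Fin k) (u : Fin dI) (c : Fin k), a < c → Bmat (a, u) c = 0)
    (hdiag : ∀ (a : Fin k) (u : Fin dI),
      Bmat (a, u) a = (⇑σ.symm)^[a.1] ((B₀ u).eval ((⇑σ)^[a.1] γ))) :
    Module.finrank F (LinearMap.ker Bmat.mulVecLin) ≤ s - 1 ∧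
    ∀ qv : Fin k × Fin dI → F,
      Nat.card {f : Fin k → F // Bmat.mulVec f = qv} ≤ q ^ (m * (s - 1)) := by
  classical
  have hpts : Function.Injective fun a : Fin k => (⇑σ)^[a.1] γ := fun a b hab =>
    by_contra fun hne => hdist a b a.2 b.2 (Fin.val_ne_of_ne hne) hab
  have hdim : Module.finrank F (LinearMap.ker Bmat.mulVecLin) ≤ s - 1 := calc
    _ ≤ #{a | Bmat (a, ⟨0, hdI⟩) a = 0} :=
      Bmat.finrank_ker_mulVecLin_le_card_diag_eq_zero (fun a => (a, ⟨0, hdI⟩)) (htri · _)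
    _ = #{a : Fin k | (B₀ ⟨0, hdI⟩).IsRoot ((⇑σ)^[a.1] γ)} := by
      simp only [hdiag, σ.symm.iterate_eq_zero_iff, IsRoot.def]
    _ ≤ (B₀ ⟨0, hdI⟩).natDegree := card_filter_isRoot_le_natDegree hB₀ne hpts
    _ ≤ s - 1 := hB₀deg _
  refine ⟨hdim, fun qv => ?_⟩
  calc Nat.card {f : Fin k → F // Bmat.mulVec f = qv}
      ≤ Nat.card (LinearMap.ker Bmat.mulVecLin) := Bmat.mulVecLin.natCard_fiber_le_natCard_ker qv
    _ = Nat.card F ^ Module.finrank F (LinearMap.ker Bmat.mulVecLin) :=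
      Module.natCard_eq_pow_finrank
    _ ≤ Nat.card F ^ (s - 1) := Nat.pow_le_pow_right Nat.card_pos hdim
    _ = q ^ (m * (s - 1)) := by rw [Nat.card_eq_fintype_card, hcard, pow_mul]

/-- For the root-finding step of the FLRS decoder: the solution space of the
root-finding system has dimension `d_RF ≤ s − 1`, hence the list of candidate
message polynomials has size at most `q^{m(s−1)}`.  The root-finding matrix is
block lower triangular with `k` block columns; its diagonal blocks are the vectors
whose entries are (up to the automorphism) the evaluations of the polynomials
`B₀⁽ᵘ⁾` (the first one nonzero, all of degree ≤ s−1) at the pairwise distinct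
points `σ^a(γ)`. -/
theorem stmt_13 (q m : ℕ) (hq : IsPrimePow q) (hm : 0 < m)
    (F : Type*) [Field F] [Fintype F] (hcard : Fintype.card F = q ^ m)
    (σ : F ≃+* F) (γ : F)
    (s k dI : ℕ) (hs : 1 ≤ s) (hk : 1 ≤ k) (hdI : 1 ≤ dI)
    (hdist : ∀ a b : ℕ, a < k → b < k → a ≠ b → (⇑σ)^[a] γ ≠ (⇑σ)^[b] γ)
    (B₀ : Fin dI → Polynomial F)
    (hB₀ne : B₀ ⟨0, hdI⟩ ≠ 0)
    (hB₀deg : ∀ u, (B₀ u).natDegree ≤ s - 1)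
    (Bmat : Matrix (Fin k × Fin dI) (Fin k) F)
    (htri : ∀ (a : Fin k) (u : Fin dI) (c : Fin k), a < c → Bmat (a, u) c = 0)
    (hdiag : ∀ (a : Fin k) (u : Fin dI),
      Bmat (a, u) a = (⇑σ.symm)^[a.1] ((B₀ u).eval ((⇑σ)^[a.1] γ))) :
    Module.finrank F (LinearMap.ker Bmat.mulVecLin) ≤ s - 1 ∧
    ∀ qv : Fin k × Fin dI → F,
      Nat.card {f : Fin k → F // Bmat.mulVec f = qv} ≤ q ^ (m * (s - 1)) :=
  stmt_13_general q m F hcard σ γ s k dI hdI hdist B₀ hB₀ne hB₀deg Bmat htri hdiag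
end
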